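/- arXiv:1509.00675 — 5 statements merged into one kernel-verified Lean document; each statement's English description precedes it below -/
import Mathlib

section
/- Let μ be a probability measure on ℝ and q : ℝ → ℝ a non-decreasing function with ∫|q| dμ < ∞ and ∫|b·q(b)| dμ(b) < ∞. For t > 0 and x ∈ ℝ define the tilted probability measure μ_{t,x}(db) = e^{bx - b²t/2} μ(db) / ∫ e^{bx - b²t/2} μ(db). Then the function u(x) = ∫ q(b) μ_{t,x}(db) is non-decreasing in x. -/
open MeasureTheory Real Set

lemma aux_exp_bound (t z b : ℝ) (ht : 0 < t) :
    b * z - b ^ 2 * t / 2 ≤ z ^ 2 / (2 * t) := by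
  rw [le_div_iff₀ (by linarith)]
  nlinarith [sq_nonneg (b * t - z)]

lemma aux_integrable_exp (μ : Measure ℝ) [IsProbabilityMeasure μ] (t z : ℝ) (ht : 0 < t) :
    Integrable (fun b => Real.exp (b * z - b ^ 2 * t / 2)) μ := by
  refine (integrable_const (Real.exp (z ^ 2 / (2 * t)))).mono' ?_ ?_
  · exact (Continuous.rexp (by continuity)).aestronglyMeasurable
  · filter_upwards with b
    rw [Real.norm_eq_abs, abs_of_pos (Real.exp_pos _)]
    exact Real.exp_le_exp.2 (aux_exp_bound t z b ht)

lemma aux_integrable_qexp (μ : Measure ℝ) [IsProbabilityMeasure μ] (q : ℝ → ℝ)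
    (hq1 : Integrable q μ) (t z : ℝ) (ht : 0 < t) :
    Integrable (fun b => q b * Real.exp (b * z - b ^ 2 * t / 2)) μ := by
  refine (hq1.abs.const_mul (Real.exp (z ^ 2 / (2 * t)))).mono' ?_ ?_
  · exact hq1.aestronglyMeasurable.mul (Continuous.rexp (by continuity)).aestronglyMeasurable
  · filter_upwards with b
    rw [Real.norm_eq_abs, abs_mul, abs_of_pos (Real.exp_pos _), mul_comm]
    gcongr
    exact aux_exp_bound t z b ht

theorem stmt_0 (μ : Measure ℝ) [IsProbabilityMeasure μ]
    (ε : ℝ) (hε : 0 < ε)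
    (hexp : Integrable (fun b => Real.exp (ε * b ^ 2)) μ)
    (q : ℝ → ℝ) (hq : Monotone q)
    (hq1 : Integrable q μ)
    (hq2 : Integrable (fun b => b * q b) μ)
    (t : ℝ) (ht : 0 < t) :
    Monotone (fun x =>
      (∫ b, q b * Real.exp (b * x - b ^ 2 * t / 2) ∂μ) /
      (∫ b, Real.exp (b * x - b ^ 2 * t / 2) ∂μ)) := by
  intro x y hxy
  simp only
  set f : ℝ → ℝ := fun b => Real.exp (b * x - b ^ 2 * t / 2) with hf_def
  set g : ℝ → ℝ := fun b => Real.exp (b * y - b ^ 2 * t / 2) with hg_def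
  have hf : Integrable f μ := aux_integrable_exp μ t x ht
  have hg : Integrable g μ := aux_integrable_exp μ t y ht
  have hqf : Integrable (fun b => q b * f b) μ := aux_integrable_qexp μ q hq1 t x ht
  have hqg : Integrable (fun b => q b * g b) μ := aux_integrable_qexp μ q hq1 t y ht
  have hIf : 0 < ∫ b, f b ∂μ := integral_exp_pos hf
  have hIg : 0 < ∫ b, g b ∂μ := integral_exp_pos hg
  rw [div_le_div_iff₀ hIf hIg]
  -- key inequality via product measure
  have key : 0 ≤ ∫ p : ℝ × ℝ, (q p.1 - q p.2) * (g p.1 * f p.2 - f p.1 * g p.2) ∂(μ.prod μ) := by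
    refine integral_nonneg fun p => ?_
    obtain ⟨a, b⟩ := p
    simp only
    have hfg : g a * f b = Real.exp ((a * y - a ^ 2 * t / 2) + (b * x - b ^ 2 * t / 2)) := by
      rw [Real.exp_add]
    have hgf : f a * g b = Real.exp ((a * x - a ^ 2 * t / 2) + (b * y - b ^ 2 * t / 2)) := by
      rw [Real.exp_add]
    rcases le_total a b with hab | hab
    · have hA : q a - q b ≤ 0 := sub_nonpos.2 (hq hab)
      have hB : g a * f b - f a * g b ≤ 0 := by
        rw [sub_nonpos, hfg, hgf]
        apply Real.exp_le_exp.2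
        nlinarith
      have := mul_nonneg (neg_nonneg.2 hA) (neg_nonneg.2 hB)
      rwa [neg_mul_neg] at this
    · refine mul_nonneg (sub_nonneg.2 (hq hab)) ?_
      rw [sub_nonneg, hfg, hgf]
      apply Real.exp_le_exp.2
      nlinarith
  have h1 : Integrable (fun p : ℝ × ℝ => (q p.1 * g p.1) * f p.2) (μ.prod μ) :=
    hqg.mul_prod hf
  have h2 : Integrable (fun p : ℝ × ℝ => (q p.1 * f p.1) * g p.2) (μ.prod μ) :=
    hqf.mul_prod hg
  have h3 : Integrable (fun p : ℝ × ℝ => g p.1 * (q p.2 * f p.2)) (μ.prod μ) :=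
    hg.mul_prod hqf
  have h4 : Integrable (fun p : ℝ × ℝ => f p.1 * (q p.2 * g p.2)) (μ.prod μ) :=
    hf.mul_prod hqg
  have h14 : Integrable (fun p : ℝ × ℝ =>
      (q p.1 * g p.1) * f p.2 + f p.1 * (q p.2 * g p.2)) (μ.prod μ) := h1.add h4
  have h23 : Integrable (fun p : ℝ × ℝ =>
      (q p.1 * f p.1) * g p.2 + g p.1 * (q p.2 * f p.2)) (μ.prod μ) := h2.add h3
  have hexpand : (fun p : ℝ × ℝ => (q p.1 - q p.2) * (g p.1 * f p.2 - f p.1 * g p.2)) =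
      fun p : ℝ × ℝ => ((q p.1 * g p.1) * f p.2 + f p.1 * (q p.2 * g p.2)) -
        ((q p.1 * f p.1) * g p.2 + g p.1 * (q p.2 * f p.2)) := by
    funext p; ring
  rw [hexpand, integral_sub h14 h23, integral_add h1 h4, integral_add h2 h3,
    integral_prod_mul (fun b => q b * g b) f, integral_prod_mul f (fun b => q b * g b),
    integral_prod_mul (fun b => q b * f b) g, integral_prod_mul g (fun b => q b * f b)] at key
  show (∫ b, q b * f b ∂μ) * ∫ b, g b ∂μ ≤ (∫ b, q b * g b ∂μ) * ∫ b, f b ∂μ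
  linarith [key]
end

section
/- Let μ be a Borel probability measure on ℝ with 0 < μ([0,∞)) < 1 and ∫ e^{εb²} μ(db) < ∞ for some ε > 0. For fixed t > 0, define π(t,x) = ∫_{[0,∞)} e^{bx - b²t/2} μ(db) / ∫_ℝ e^{bx - b²t/2} μ(db). Then x ↦ π(t,x) is a strictly increasing continuous bijection from ℝ onto (0,1). -/
/-!
Writing `π = (1 + A)⁻¹`, where `A(t,x)` is the ratio of the tilted masses of `(-∞,0)` and
`[0,∞)`, everything reduces to `A`. Since `t > 0`, the weight `e^{bx - b²t/2}` is bounded by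
`e^{x²/2t}`, so `A` is continuous by dominated convergence. The weight increases in `x` for
`b ≥ 0` and strictly decreases for `b < 0`, so `A` is strictly decreasing once `μ` charges both
half-lines. As `x → ∞` the numerator of `A` tends to `0` by dominated convergence, while
as `x → -∞` it grows at least like `e^{cx}` for some `c < 0` with `μ((-∞,c]) > 0`, the
denominator staying bounded.
-/

open MeasureTheory Real Set

/-- The posterior probability `π(t,x)` that the drift lies in `S`, under the
exponentially tilted measure `μ_{t,x}(db) = e^{bx - b²t/2} μ(db) / normalizer`. -/
noncomputable def tiltProb (μ : Measure ℝ) (t x : ℝ) (S : Set ℝ) : ℝ :=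
  (∫ b in S, Real.exp (b * x - b ^ 2 * t / 2) ∂μ) /
  (∫ b, Real.exp (b * x - b ^ 2 * t / 2) ∂μ)

open Filter Topology

theorem range_eq_Ioo_of_tendsto {α β : Type*} [LinearOrder α] [TopologicalSpace α]
    [PreconnectedSpace α] [Nonempty α] [NoMaxOrder α] [NoMinOrder α]
    [LinearOrder β] [TopologicalSpace β] [OrderClosedTopology β]
    {f : α → β} {a b : β} (hf : StrictMono f) (hc : Continuous f)
    (hbot : Tendsto f atBot (𝓝 a)) (htop : Tendsto f atTop (𝓝 b)) :
    range f = Ioo a b := by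
  refine Subset.antisymm ?_ fun c hc' => ?_
  · rintro _ ⟨x, rfl⟩
    obtain ⟨y, hy⟩ := exists_lt x
    obtain ⟨z, hz⟩ := exists_gt x
    exact ⟨(hf.monotone.le_of_tendsto hbot y).trans_lt (hf hy),
      (hf hz).trans_le (hf.monotone.ge_of_tendsto htop z)⟩
  · obtain ⟨x, hx⟩ := (hbot.eventually_lt_const hc'.1).exists
    obtain ⟨y, hy⟩ := (htop.eventually_const_lt hc'.2).exists
    exact mem_range_of_exists_le_of_exists_ge hc ⟨x, hx.le⟩ ⟨y, hy.le⟩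

theorem setIntegral_pos_of_pos_on {α : Type*} [MeasurableSpace α] {μ : Measure α} {s : Set α}
    {f : α → ℝ} (hs : MeasurableSet s) (hμs : μ s ≠ 0) (hf : IntegrableOn f s μ)
    (hpos : ∀ x ∈ s, 0 < f x) : 0 < ∫ x in s, f x ∂μ := by
  rw [setIntegral_pos_iff_support_of_nonneg_ae
    ((ae_restrict_iff' hs).2 (.of_forall fun x hx => (hpos x hx).le)) hf]
  exact hμs.bot_lt.trans_le (measure_mono fun x hx => ⟨(hpos x hx).ne', hx⟩)

theorem exists_lt_measure_Iic_ne_zero {μ : Measure ℝ} {a : ℝ} (h : μ (Iio a) ≠ 0) :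
    ∃ c < a, μ (Iic c) ≠ 0 := by
  obtain ⟨u, -, hua, hu⟩ := exists_seq_strictMono_tendsto a
  rw [← iUnion_Iic_eq_Iio_of_lt_of_tendsto hua hu] at h
  obtain ⟨n, hn⟩ := exists_measure_pos_of_not_measure_iUnion_null h
  exact ⟨u n, hua n, hn.ne'⟩

theorem mul_sub_sq_mul_div_two_le {t : ℝ} (ht : 0 < t) (b x : ℝ) :
    b * x - b ^ 2 * t / 2 ≤ x ^ 2 / (2 * t) := by
  rw [le_div_iff₀ (by positivity)]
  nlinarith [sq_nonneg (x - b * t)]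

noncomputable def tiltWeight (t x b : ℝ) : ℝ := exp (b * x - b ^ 2 * t / 2)

/-- The odds `A(t,x)` against a nonnegative drift under the tilted measure. -/
noncomputable def tiltOdds (μ : Measure ℝ) (t x : ℝ) : ℝ :=
  (∫ b in Iio 0, tiltWeight t x b ∂μ) / ∫ b in Ici 0, tiltWeight t x b ∂μ

section TiltWeight

variable {t : ℝ}

theorem tiltWeight_pos (t x b : ℝ) : 0 < tiltWeight t x b := exp_pos _

theorem tiltWeight_le (ht : 0 < t) (x b : ℝ) : tiltWeight t x b ≤ exp (x ^ 2 / (2 * t)) :=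
  exp_le_exp.2 (mul_sub_sq_mul_div_two_le ht b x)

theorem continuous_tiltWeight (t x : ℝ) : Continuous (tiltWeight t x) := by
  unfold tiltWeight; fun_prop

theorem integrable_tiltWeight (ν : Measure ℝ) [IsFiniteMeasure ν] (ht : 0 < t) (x : ℝ) :
    Integrable (tiltWeight t x) ν :=
  (integrable_const (exp (x ^ 2 / (2 * t)))).mono' (continuous_tiltWeight t x).aestronglyMeasurable
    (.of_forall fun b => by
      rw [norm_of_nonneg (tiltWeight_pos t x b).le]; exact tiltWeight_le ht x b)

theorem continuous_integral_tiltWeight (ν : Measure ℝ) [IsFiniteMeasure ν] (ht : 0 < t) :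
    Continuous fun x => ∫ b, tiltWeight t x b ∂ν := by
  refine continuous_iff_continuousAt.2 fun x₀ => continuousAt_of_dominated
    (bound := fun _ => exp ((|x₀| + 1) ^ 2 / (2 * t)))
    (.of_forall fun x => (continuous_tiltWeight t x).aestronglyMeasurable) ?_
    (integrable_const _) (.of_forall fun b => by unfold tiltWeight; fun_prop)
  filter_upwards [Metric.ball_mem_nhds x₀ one_pos] with x hx
  refine .of_forall fun b => ?_
  rw [norm_of_nonneg (tiltWeight_pos t x b).le]
  have hx' : |x| ≤ |x₀| + 1 := by
    rw [Metric.mem_ball, Real.dist_eq] at hx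
    linarith [abs_sub_abs_le_abs_sub x x₀]
  have hsq : x ^ 2 ≤ (|x₀| + 1) ^ 2 := sq_le_sq.2 (hx'.trans (le_abs_self _))
  refine (tiltWeight_le ht x b).trans (exp_le_exp.2 ?_)
  gcongr

end TiltWeight

section TiltIntegral

variable {μ : Measure ℝ} [IsFiniteMeasure μ] {t : ℝ}

theorem setIntegral_tiltWeight_pos (ht : 0 < t) {s : Set ℝ} (hs : MeasurableSet s)
    (hμs : μ s ≠ 0) (x : ℝ) : 0 < ∫ b in s, tiltWeight t x b ∂μ :=
  setIntegral_pos_of_pos_on hs hμs (integrable_tiltWeight μ ht x).integrableOn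
    fun b _ => tiltWeight_pos t x b

theorem monotone_setIntegral_tiltWeight_Ici (ht : 0 < t) :
    Monotone fun x => ∫ b in Ici 0, tiltWeight t x b ∂μ := fun x y hxy =>
  setIntegral_mono_on (integrable_tiltWeight μ ht x).integrableOn
    (integrable_tiltWeight μ ht y).integrableOn measurableSet_Ici fun b (hb : 0 ≤ b) =>
      exp_le_exp.2 (by nlinarith)

theorem strictAnti_setIntegral_tiltWeight_Iio (ht : 0 < t) (hμ : μ (Iio 0) ≠ 0) :
    StrictAnti fun x => ∫ b in Iio 0, tiltWeight t x b ∂μ := by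
  intro x y hxy
  have hint (x : ℝ) := (integrable_tiltWeight μ ht x).integrableOn (s := Iio 0)
  have hdiff : 0 < ∫ b in Iio 0, (tiltWeight t x b - tiltWeight t y b) ∂μ :=
    setIntegral_pos_of_pos_on measurableSet_Iio hμ ((hint x).sub (hint y))
      fun b (hb : b < 0) => sub_pos.2 (exp_lt_exp.2 (by nlinarith))
  rw [integral_sub (hint x) (hint y)] at hdiff
  linarith

theorem tendsto_setIntegral_tiltWeight_Iio_atTop (ht : 0 ≤ t) :
    Tendsto (fun x => ∫ b in Iio 0, tiltWeight t x b ∂μ) atTop (𝓝 0) := by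
  have h := tendsto_integral_filter_of_dominated_convergence (μ := μ.restrict (Iio 0))
    (l := atTop) (F := fun x b => tiltWeight t x b) (f := fun _ => 0) (fun _ => 1)
    (.of_forall fun x => (continuous_tiltWeight t x).aestronglyMeasurable) ?_
    (integrable_const _) ?_
  · simpa using h
  · filter_upwards [eventually_ge_atTop 0] with x (hx : 0 ≤ x)
    refine (ae_restrict_iff' measurableSet_Iio).2 (.of_forall fun b (hb : b < 0) => ?_)
    rw [norm_of_nonneg (tiltWeight_pos t x b).le, tiltWeight, exp_le_one_iff]
    nlinarith [mul_nonneg (sq_nonneg b) ht]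
  · refine (ae_restrict_iff' measurableSet_Iio).2 (.of_forall fun b (hb : b < 0) => ?_)
    exact tendsto_exp_atBot.comp
      (tendsto_atBot_add_const_right _ _ (tendsto_id.const_mul_atTop_of_neg hb))

theorem tendsto_setIntegral_tiltWeight_Iio_atBot (ht : 0 < t) (hμ : μ (Iio 0) ≠ 0) :
    Tendsto (fun x => ∫ b in Iio 0, tiltWeight t x b ∂μ) atBot atTop := by
  obtain ⟨c, hc, hμc⟩ := exists_lt_measure_Iic_ne_zero hμ
  set K := ∫ b in Iic c, tiltWeight t 0 b ∂μ
  have hK : 0 < K := setIntegral_tiltWeight_pos ht measurableSet_Iic hμc 0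
  have hlower : ∀ x ≤ 0, exp (c * x) * K ≤ ∫ b in Iio 0, tiltWeight t x b ∂μ := by
    intro x hx
    calc exp (c * x) * K = ∫ b in Iic c, exp (c * x) * tiltWeight t 0 b ∂μ :=
          (integral_const_mul _ _).symm
      _ ≤ ∫ b in Iic c, tiltWeight t x b ∂μ :=
          setIntegral_mono_on ((integrable_tiltWeight μ ht 0).integrableOn.const_mul _)
            (integrable_tiltWeight μ ht x).integrableOn measurableSet_Iic
            fun b (hb : b ≤ c) => by
              rw [tiltWeight, tiltWeight, ← exp_add]
              exact exp_le_exp.2 (by nlinarith)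
      _ ≤ ∫ b in Iio 0, tiltWeight t x b ∂μ :=
          setIntegral_mono_set (integrable_tiltWeight μ ht x).integrableOn
            (.of_forall fun b => (tiltWeight_pos t x b).le)
            (Iic_subset_Iio.2 hc).eventuallyLE
  refine tendsto_atTop_mono' _ (eventually_le_atBot 0 |>.mono hlower) ?_
  exact (tendsto_exp_atTop.comp (tendsto_id.const_mul_atBot_of_neg hc)).atTop_mul_const hK

end TiltIntegral

section TiltOdds

variable {μ : Measure ℝ} [IsFiniteMeasure μ] {t : ℝ}

theorem tiltProb_Ici_eq_inv_one_add_tiltOdds (ht : 0 < t) (hpos : μ (Ici 0) ≠ 0) (x : ℝ) :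
    tiltProb μ t x (Ici 0) = (1 + tiltOdds μ t x)⁻¹ := by
  have hsplit : ∫ b, tiltWeight t x b ∂μ
      = (∫ b in Ici 0, tiltWeight t x b ∂μ) + ∫ b in Iio 0, tiltWeight t x b ∂μ := by
    rw [← compl_Ici, integral_add_compl measurableSet_Ici (integrable_tiltWeight μ ht x)]
  have hN := setIntegral_tiltWeight_pos ht measurableSet_Ici hpos x
  change (∫ b in Ici 0, tiltWeight t x b ∂μ) / (∫ b, tiltWeight t x b ∂μ) = _
  rw [hsplit, tiltOdds]
  field_simp

theorem tiltOdds_pos (ht : 0 < t) (hpos : μ (Ici 0) ≠ 0) (hneg : μ (Iio 0) ≠ 0) (x : ℝ) :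
    0 < tiltOdds μ t x :=
  div_pos (setIntegral_tiltWeight_pos ht measurableSet_Iio hneg x)
    (setIntegral_tiltWeight_pos ht measurableSet_Ici hpos x)

theorem strictAnti_tiltOdds (ht : 0 < t) (hpos : μ (Ici 0) ≠ 0) (hneg : μ (Iio 0) ≠ 0) :
    StrictAnti (tiltOdds μ t) := fun x y hxy =>
  calc tiltOdds μ t y
      < (∫ b in Iio 0, tiltWeight t x b ∂μ) / ∫ b in Ici 0, tiltWeight t y b ∂μ :=
        div_lt_div_of_pos_right (strictAnti_setIntegral_tiltWeight_Iio ht hneg hxy)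
          (setIntegral_tiltWeight_pos ht measurableSet_Ici hpos y)
    _ ≤ tiltOdds μ t x :=
        div_le_div_of_nonneg_left (setIntegral_tiltWeight_pos ht measurableSet_Iio hneg x).le
          (setIntegral_tiltWeight_pos ht measurableSet_Ici hpos x)
          (monotone_setIntegral_tiltWeight_Ici ht hxy.le)

theorem continuous_tiltOdds (ht : 0 < t) (hpos : μ (Ici 0) ≠ 0) : Continuous (tiltOdds μ t) :=
  (continuous_integral_tiltWeight _ ht).div (continuous_integral_tiltWeight _ ht)
    fun x => (setIntegral_tiltWeight_pos ht measurableSet_Ici hpos x).ne'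

theorem tendsto_tiltOdds_atTop (ht : 0 < t) (hpos : μ (Ici 0) ≠ 0) :
    Tendsto (tiltOdds μ t) atTop (𝓝 0) := by
  set N₀ := ∫ b in Ici 0, tiltWeight t 0 b ∂μ
  have hN₀ : 0 < N₀ := setIntegral_tiltWeight_pos ht measurableSet_Ici hpos 0
  refine squeeze_zero' (.of_forall fun x => ?_) ?_
    (by simpa using (tendsto_setIntegral_tiltWeight_Iio_atTop (μ := μ) ht.le).div_const N₀)
  · exact div_nonneg (setIntegral_nonneg measurableSet_Iio fun b _ => (tiltWeight_pos t x b).le)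
      (setIntegral_tiltWeight_pos ht measurableSet_Ici hpos x).le
  · filter_upwards [eventually_ge_atTop 0] with x hx
    exact div_le_div_of_nonneg_left
      (setIntegral_nonneg measurableSet_Iio fun b _ => (tiltWeight_pos t x b).le) hN₀
      (monotone_setIntegral_tiltWeight_Ici ht hx)

theorem tendsto_tiltOdds_atBot (ht : 0 < t) (hpos : μ (Ici 0) ≠ 0) (hneg : μ (Iio 0) ≠ 0) :
    Tendsto (tiltOdds μ t) atBot atTop := by
  have hN₀ := setIntegral_tiltWeight_pos ht measurableSet_Ici hpos 0
  refine tendsto_atTop_mono' _ ?_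
    ((tendsto_setIntegral_tiltWeight_Iio_atBot ht hneg).atTop_div_const hN₀)
  filter_upwards [eventually_le_atBot 0] with x hx
  exact div_le_div_of_nonneg_left
    (setIntegral_tiltWeight_pos ht measurableSet_Iio hneg x).le
    (setIntegral_tiltWeight_pos ht measurableSet_Ici hpos x)
    (monotone_setIntegral_tiltWeight_Ici ht hx)

end TiltOdds

theorem stmt_2_general (μ : Measure ℝ) [IsProbabilityMeasure μ]
    (hμ0 : 0 < μ (Set.Ici (0:ℝ))) (hμ1 : μ (Set.Ici (0:ℝ)) < 1)
    (t : ℝ) (ht : 0 < t) :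
    StrictMono (fun x => tiltProb μ t x (Set.Ici 0)) ∧
    Continuous (fun x => tiltProb μ t x (Set.Ici 0)) ∧
    Set.range (fun x => tiltProb μ t x (Set.Ici 0)) = Set.Ioo 0 1 := by
  have hpos : μ (Ici 0) ≠ 0 := hμ0.ne'
  have hneg : μ (Iio 0) ≠ 0 := by
    rw [← compl_Ici, prob_compl_eq_one_sub measurableSet_Ici]
    exact (tsub_pos_of_lt hμ1).ne'
  have hodds_pos := tiltOdds_pos ht hpos hneg
  simp only [tiltProb_Ici_eq_inv_one_add_tiltOdds ht hpos]
  have hmono : StrictMono fun x => (1 + tiltOdds μ t x)⁻¹ := fun x y hxy =>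
    (inv_lt_inv₀ (add_pos one_pos (hodds_pos x)) (add_pos one_pos (hodds_pos y))).2
      ((add_lt_add_iff_left 1).2 (strictAnti_tiltOdds ht hpos hneg hxy))
  have hcont : Continuous fun x => (1 + tiltOdds μ t x)⁻¹ :=
    (continuous_const.add (continuous_tiltOdds ht hpos)).inv₀
      fun x => (add_pos one_pos (hodds_pos x)).ne'
  refine ⟨hmono, hcont, range_eq_Ioo_of_tendsto hmono hcont ?_ ?_⟩
  · exact tendsto_inv_atTop_zero.comp
      (tendsto_atTop_add_const_left _ 1 (tendsto_tiltOdds_atBot ht hpos hneg))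
  · simpa using ((tendsto_tiltOdds_atTop ht hpos).const_add 1).inv₀ (by norm_num)

theorem stmt_2 (μ : Measure ℝ) [IsProbabilityMeasure μ]
    (hμ0 : 0 < μ (Set.Ici (0:ℝ))) (hμ1 : μ (Set.Ici (0:ℝ)) < 1)
    (ε : ℝ) (hε : 0 < ε)
    (hexp : Integrable (fun b => Real.exp (ε * b ^ 2)) μ)
    (t : ℝ) (ht : 0 < t) :
    StrictMono (fun x => tiltProb μ t x (Set.Ici 0)) ∧
    Continuous (fun x => tiltProb μ t x (Set.Ici 0)) ∧
    Set.range (fun x => tiltProb μ t x (Set.Ici 0)) = Set.Ioo 0 1 :=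
  stmt_2_general μ hμ0 hμ1 t ht
end

section
/- Let μ be a probability measure on ℝ satisfying ∫ e^{εb²} μ(db) < ∞ for some ε > 0 and 0 < μ([0,∞)) < 1. Define for π ∈ (0,1) and t ≥ 0 the volatility σ(t,π) = (1-π)·E_{t,x(t,π)}[B 1_{B≥0}] - π·E_{t,x(t,π)}[B 1_{B<0}], where E_{t,x} denotes integration against μ_{t,x} and x(t,π) is the level-curve value with μ_{t,x(t,π)}([0,∞)) = π. Then for each fixed π, t ↦ σ(t,π) is non-increasing; it is strictly decreasing unless μ is a two-point distribution, in which case it is constant. -/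
/-!
Fix `π` and times `s < t`, and let `F`, `G` be the densities of `μ_{s,x(s,π)}` and `μ_{t,x(t,π)}`
with respect to `μ`. Then `G / F = exp q` for a concave quadratic `q`. Both laws give mass `π` to
`[0, ∞)` and `1 - π` to `(-∞, 0)`, so `q ≥ 0` somewhere on each half-line; hence `q(0) ≥ 0` and
`q b = β (b - u) (v - b)` with `u ≤ 0 ≤ v`. So `G - F` changes sign only at `v` on `[0, ∞)` and
only at `u` on `(-∞, 0)`, and integrating `(v - b) (G - F) ≥ 0` against equal masses gives
`E_t[B 1_{B ≥ 0}] ≤ E_s[B 1_{B ≥ 0}]`, and symmetrically `E_s[B 1_{B < 0}] ≤ E_t[B 1_{B < 0}]`: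
this is `σ(t,π) ≤ σ(s,π)`. Equality forces these integrands to vanish a.e., which puts `μ` on
`{u, v}`. Conversely, for `μ` carried by `{a, c}` with `c < 0 ≤ a`, `σ(t,π) = π (1 - π) (a - c)`.
-/

open MeasureTheory Set

/-- The truncated posterior mean `E_{t,x}[B 1_S(B)]` under the tilted measure `μ_{t,x}`. -/
noncomputable def tiltMean (μ : Measure ℝ) (t x : ℝ) (S : Set ℝ) : ℝ :=
  (∫ b in S, b * Real.exp (b * x - b ^ 2 * t / 2) ∂μ) /
  (∫ b, Real.exp (b * x - b ^ 2 * t / 2) ∂μ)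

lemma mul_exp_sub_one_nonneg {c q : ℝ} (h : 0 ≤ c * q) : 0 ≤ c * (Real.exp q - 1) := by
  rcases lt_trichotomy q 0 with hq | rfl | hq
  · have : c ≤ 0 := by nlinarith
    nlinarith [Real.exp_lt_one_iff.2 hq]
  · simp
  · have : 0 ≤ c := by nlinarith
    nlinarith [Real.one_lt_exp_iff.2 hq]

lemma exists_factorization_of_concave_quadratic {α β γ b₁ b₂ : ℝ} (hβ : 0 < β)
    (hb₁ : b₁ ≤ 0) (hb₂ : 0 ≤ b₂)
    (h₁ : 0 ≤ γ + α * b₁ - β * b₁ ^ 2) (h₂ : 0 ≤ γ + α * b₂ - β * b₂ ^ 2) :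
    ∃ u v, u ≤ 0 ∧ 0 ≤ v ∧ ∀ b, γ + α * b - β * b ^ 2 = β * (b - u) * (v - b) := by
  have hγ : 0 ≤ γ := by
    rcases hb₂.eq_or_lt with rfl | hb₂
    · simpa using h₂
    -- `b₂ q(b₁) - b₁ q(b₂) = (b₂ - b₁) (γ + β b₁ b₂)`
    have h : 0 ≤ γ + β * b₁ * b₂ := nonneg_of_mul_nonneg_right (a := b₂ - b₁)
      (by nlinarith [mul_nonneg hb₂.le h₁, mul_nonneg (neg_nonneg.2 hb₁) h₂]) (by linarith)
    nlinarith [mul_nonneg (mul_nonneg hβ.le (neg_nonneg.2 hb₁)) hb₂.le]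
  set R := Real.sqrt (α ^ 2 + 4 * β * γ)
  have hR : R ^ 2 = α ^ 2 + 4 * β * γ := Real.sq_sqrt (by positivity)
  have hαR : |α| ≤ R := Real.abs_le_sqrt (by nlinarith [mul_nonneg hβ.le hγ])
  refine ⟨(α - R) / (2 * β), (α + R) / (2 * β), ?_, ?_, fun b => ?_⟩
  · exact div_nonpos_of_nonpos_of_nonneg (by linarith [le_abs_self α]) (by positivity)
  · exact div_nonneg (by linarith [neg_abs_le α]) (by positivity)
  · field_simp
    linear_combination -hR

lemma exists_single_crossing {F G : ℝ → ℝ} {α β γ b₁ b₂ : ℝ} (hβ : 0 < β)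
    (hF : ∀ b, 0 < F b) (hGF : ∀ b, G b = F b * Real.exp (γ + α * b - β * b ^ 2))
    (hb₁ : b₁ ≤ 0) (hb₂ : 0 ≤ b₂) (h₁ : F b₁ ≤ G b₁) (h₂ : F b₂ ≤ G b₂) :
    ∃ u v, (∀ b, 0 ≤ b → 0 ≤ (v - b) * (G b - F b)) ∧
      (∀ b, b ≤ 0 → 0 ≤ (u - b) * (F b - G b)) ∧ ∀ b, G b = F b → b = u ∨ b = v := by
  have hq : ∀ b, F b ≤ G b → 0 ≤ γ + α * b - β * b ^ 2 := fun b hb => by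
    rwa [hGF, le_mul_iff_one_le_right (hF b), Real.one_le_exp_iff] at hb
  obtain ⟨u, v, hu, hv, hfac⟩ :=
    exists_factorization_of_concave_quadratic hβ hb₁ hb₂ (hq b₁ h₁) (hq b₂ h₂)
  have hGF' : ∀ b, G b - F b = F b * (Real.exp (β * (b - u) * (v - b)) - 1) := fun b => by
    rw [hGF, hfac]; ring
  refine ⟨u, v, fun b hb => ?_, fun b hb => ?_, fun b hb => ?_⟩
  · have key := mul_exp_sub_one_nonneg (c := v - b) (q := β * (b - u) * (v - b))
      (by nlinarith [mul_nonneg (mul_nonneg hβ.le (by linarith : 0 ≤ b - u)) (sq_nonneg (v - b))])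
    rw [hGF', mul_left_comm]
    exact mul_nonneg (hF b).le key
  · have key := mul_exp_sub_one_nonneg (c := b - u) (q := β * (b - u) * (v - b))
      (by nlinarith [mul_nonneg (mul_nonneg hβ.le (by linarith : 0 ≤ v - b)) (sq_nonneg (b - u))])
    rw [show (u - b) * (F b - G b) = (b - u) * (G b - F b) by ring, hGF', mul_left_comm]
    exact mul_nonneg (hF b).le key
  · have h0 : β * (b - u) * (v - b) = 0 := by
      have h := hGF' b
      rw [sub_eq_zero.2 hb, eq_comm, mul_eq_zero, sub_eq_zero, Real.exp_eq_one_iff] at h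
      exact h.resolve_left (hF b).ne'
    rcases mul_eq_zero.1 h0 with h0 | h0
    · exact .inl (sub_eq_zero.1 ((mul_eq_zero.1 h0).resolve_left hβ.ne'))
    · exact .inr (sub_eq_zero.1 h0).symm

lemma exists_le_of_setIntegral_eq {X : Type*} [MeasurableSpace X] {μ : Measure X} {S : Set X}
    {f g : X → ℝ} (hS : MeasurableSet S) (hμS : μ S ≠ 0) (hf : IntegrableOn f S μ)
    (hg : IntegrableOn g S μ) (hfg : ∫ x in S, f x ∂μ = ∫ x in S, g x ∂μ) :
    ∃ x ∈ S, f x ≤ g x := by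
  by_contra! hlt
  have hpos : 0 < ∫ x in S, (f x - g x) ∂μ := by
    have hsupp : (Function.support fun x => f x - g x) ∩ S = S :=
      inter_eq_right.2 fun x hx => sub_ne_zero.2 (hlt x hx).ne'
    rw [setIntegral_pos_iff_support_of_nonneg_ae
      (ae_restrict_of_forall_mem hS fun x hx => sub_nonneg.2 (hlt x hx).le) (hf.sub hg), hsupp]
    exact pos_iff_ne_zero.2 hμS
  rw [integral_sub hf hg, hfg, sub_self] at hpos
  exact hpos.false

section Crossing

variable {ν : Measure ℝ} {f g : ℝ → ℝ}

lemma integral_crossing_eq (v : ℝ) (hf : Integrable f ν) (hg : Integrable g ν)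
    (hbf : Integrable (fun b => b * f b) ν) (hbg : Integrable (fun b => b * g b) ν)
    (hfg : ∫ b, f b ∂ν = ∫ b, g b ∂ν) :
    ∫ b, (v - b) * (g b - f b) ∂ν = ∫ b, b * f b ∂ν - ∫ b, b * g b ∂ν := by
  have hsplit : (fun b => (v - b) * (g b - f b))
      = fun b => v * (g b - f b) - (b * g b - b * f b) := by
    funext b; ring
  have hvgf : Integrable (fun b => v * (g b - f b)) ν := (hg.sub hf).const_mul v
  have hbgf : Integrable (fun b => b * g b - b * f b) ν := hbg.sub hbf
  rw [hsplit, integral_sub hvgf hbgf, integral_const_mul,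
    integral_sub hg hf, integral_sub hbg hbf, hfg]
  ring

lemma integral_mul_le_of_crossing {v : ℝ} (hf : Integrable f ν) (hg : Integrable g ν)
    (hbf : Integrable (fun b => b * f b) ν) (hbg : Integrable (fun b => b * g b) ν)
    (hfg : ∫ b, f b ∂ν = ∫ b, g b ∂ν) (hcross : ∀ᵐ b ∂ν, 0 ≤ (v - b) * (g b - f b)) :
    ∫ b, b * g b ∂ν ≤ ∫ b, b * f b ∂ν :=
  sub_nonneg.1 <| integral_crossing_eq v hf hg hbf hbg hfg ▸ integral_nonneg_of_ae hcross

lemma ae_crossing_eq_zero {v : ℝ} (hf : Integrable f ν) (hg : Integrable g ν)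
    (hbf : Integrable (fun b => b * f b) ν) (hbg : Integrable (fun b => b * g b) ν)
    (hfg : ∫ b, f b ∂ν = ∫ b, g b ∂ν) (hcross : ∀ᵐ b ∂ν, 0 ≤ (v - b) * (g b - f b))
    (heq : ∫ b, b * g b ∂ν = ∫ b, b * f b ∂ν) :
    ∀ᵐ b ∂ν, (v - b) * (g b - f b) = 0 := by
  have hint : Integrable (fun b => (v - b) * (g b - f b)) ν :=
    (((hg.sub hf).const_mul v).sub (hbg.sub hbf)).congr
      (ae_of_all _ fun b => by simp only [Pi.sub_apply]; ring)
  have hzero := integral_crossing_eq v hf hg hbf hbg hfg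
  rw [heq, sub_self, integral_eq_zero_iff_of_nonneg_ae hcross hint] at hzero
  exact hzero

end Crossing

noncomputable def tiltDensity (μ : Measure ℝ) (t x b : ℝ) : ℝ :=
  Real.exp (b * x - b ^ 2 * t / 2) / ∫ b', Real.exp (b' * x - b' ^ 2 * t / 2) ∂μ

section Tilt

variable {μ : Measure ℝ} {ε t x : ℝ}

lemma integrable_exp_tilt (hε : 0 < ε) (hexp : Integrable (fun b => Real.exp (ε * b ^ 2)) μ)
    (ht : 0 ≤ t) (x : ℝ) : Integrable (fun b => Real.exp (b * x - b ^ 2 * t / 2)) μ := by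
  refine (hexp.const_mul (Real.exp (x ^ 2 / (4 * ε)))).mono'
    (by fun_prop) (ae_of_all _ fun b => ?_)
  rw [Real.norm_of_nonneg (Real.exp_pos _).le, ← Real.exp_add, Real.exp_le_exp]
  have hx : x ^ 2 / (4 * ε) * (4 * ε) = x ^ 2 := div_mul_cancel₀ _ (by positivity)
  -- AM-GM: `b x ≤ x² / (4ε) + ε b²`
  nlinarith [sq_nonneg (x - 2 * ε * b), mul_nonneg (sq_nonneg b) ht]

lemma integrable_mul_exp_tilt (hε : 0 < ε)
    (hexp : Integrable (fun b => Real.exp (ε * b ^ 2)) μ) (ht : 0 ≤ t) (x : ℝ) :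
    Integrable (fun b => b * Real.exp (b * x - b ^ 2 * t / 2)) μ := by
  refine ((integrable_exp_tilt hε hexp ht (x + 1)).add
    (integrable_exp_tilt hε hexp ht (x - 1))).mono' (by fun_prop) (ae_of_all _ fun b => ?_)
  have hb : |b| ≤ Real.exp b + Real.exp (-b) := by
    rcases abs_cases b with ⟨h, -⟩ | ⟨h, -⟩ <;> rw [h]
    · linarith [Real.add_one_le_exp b, Real.exp_pos (-b)]
    · linarith [Real.add_one_le_exp (-b), Real.exp_pos b]
  rw [norm_mul, Real.norm_eq_abs, Real.norm_of_nonneg (Real.exp_pos _).le]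
  calc |b| * Real.exp (b * x - b ^ 2 * t / 2)
      ≤ (Real.exp b + Real.exp (-b)) * Real.exp (b * x - b ^ 2 * t / 2) := by gcongr
    _ = Real.exp (b * (x + 1) - b ^ 2 * t / 2) + Real.exp (b * (x - 1) - b ^ 2 * t / 2) := by
      rw [add_mul, ← Real.exp_add, ← Real.exp_add]; ring_nf

lemma integrable_tiltDensity (hε : 0 < ε)
    (hexp : Integrable (fun b => Real.exp (ε * b ^ 2)) μ) (ht : 0 ≤ t) (x : ℝ) :
    Integrable (tiltDensity μ t x) μ :=
  (integrable_exp_tilt hε hexp ht x).div_const _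

lemma integrable_mul_tiltDensity (hε : 0 < ε)
    (hexp : Integrable (fun b => Real.exp (ε * b ^ 2)) μ) (ht : 0 ≤ t) (x : ℝ) :
    Integrable (fun b => b * tiltDensity μ t x b) μ := by
  simp only [tiltDensity, ← mul_div_assoc]
  exact (integrable_mul_exp_tilt hε hexp ht x).div_const _

lemma integral_exp_tilt_pos [NeZero μ]
    (hint : Integrable (fun b => Real.exp (b * x - b ^ 2 * t / 2)) μ) :
    0 < ∫ b, Real.exp (b * x - b ^ 2 * t / 2) ∂μ := by
  rw [integral_pos_iff_support_of_nonneg (fun b => (Real.exp_pos _).le) hint,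
    Function.support_eq_univ fun b => (Real.exp_pos _).ne']
  exact Measure.measure_univ_pos.2 (NeZero.ne μ)

lemma tiltDensity_pos [NeZero μ]
    (hint : Integrable (fun b => Real.exp (b * x - b ^ 2 * t / 2)) μ) (b : ℝ) :
    0 < tiltDensity μ t x b :=
  div_pos (Real.exp_pos _) (integral_exp_tilt_pos hint)

lemma tiltProb_eq_setIntegral (S : Set ℝ) :
    tiltProb μ t x S = ∫ b in S, tiltDensity μ t x b ∂μ := by
  simp only [tiltProb, tiltDensity, integral_div]

lemma tiltMean_eq_setIntegral (S : Set ℝ) :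
    tiltMean μ t x S = ∫ b in S, b * tiltDensity μ t x b ∂μ := by
  simp only [tiltMean, tiltDensity, ← mul_div_assoc, integral_div]

lemma tiltProb_compl [NeZero μ] {S : Set ℝ} (hS : MeasurableSet S)
    (hint : Integrable (fun b => Real.exp (b * x - b ^ 2 * t / 2)) μ) :
    tiltProb μ t x Sᶜ = 1 - tiltProb μ t x S := by
  rw [tiltProb, tiltProb, eq_sub_iff_add_eq, ← add_div, add_comm, integral_add_compl hS hint,
    div_self (integral_exp_tilt_pos hint).ne']

lemma tiltDensity_eq_mul_exp [NeZero μ] {s y : ℝ}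
    (hints : Integrable (fun b => Real.exp (b * x - b ^ 2 * s / 2)) μ)
    (hintt : Integrable (fun b => Real.exp (b * y - b ^ 2 * t / 2)) μ) :
    ∃ γ, ∀ b, tiltDensity μ t y b
      = tiltDensity μ s x b * Real.exp (γ + (y - x) * b - (t - s) / 2 * b ^ 2) := by
  have hZs := integral_exp_tilt_pos hints
  have hZt := integral_exp_tilt_pos hintt
  refine ⟨Real.log ((∫ b, Real.exp (b * x - b ^ 2 * s / 2) ∂μ) /
    ∫ b, Real.exp (b * y - b ^ 2 * t / 2) ∂μ), fun b => ?_⟩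
  have hsplit : Real.exp (b * y - b ^ 2 * t / 2)
      = Real.exp (b * x - b ^ 2 * s / 2) * Real.exp ((y - x) * b - (t - s) / 2 * b ^ 2) := by
    rw [← Real.exp_add]; ring_nf
  rw [tiltDensity, tiltDensity, hsplit, add_sub_assoc, Real.exp_add,
    Real.exp_log (div_pos hZs hZt)]
  generalize (∫ b, Real.exp (b * x - b ^ 2 * s / 2) ∂μ) = Zs at hZs ⊢
  generalize (∫ b, Real.exp (b * y - b ^ 2 * t / 2) ∂μ) = Zt at hZt ⊢
  field_simp

lemma tiltMean_eq_mul_tiltProb {S : Set ℝ} {a : ℝ} (h : ∀ᵐ b ∂μ.restrict S, b = a) :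
    tiltMean μ t x S = a * tiltProb μ t x S := by
  rw [tiltMean_eq_setIntegral, tiltProb_eq_setIntegral, ← integral_const_mul]
  exact integral_congr_ae (h.mono fun b hb => by rw [hb])

end Tilt

section Comparison

variable {μ : Measure ℝ} {ε s t xs xt : ℝ}

lemma exists_crossing_tiltDensity [NeZero μ] (hε : 0 < ε)
    (hexp : Integrable (fun b => Real.exp (ε * b ^ 2)) μ)
    (hμ0 : μ (Ici 0) ≠ 0) (hμ1 : μ (Iio 0) ≠ 0) (hs : 0 ≤ s) (hst : s < t)
    (hIci : ∫ b in Ici 0, tiltDensity μ s xs b ∂μ = ∫ b in Ici 0, tiltDensity μ t xt b ∂μ)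
    (hIio : ∫ b in Iio 0, tiltDensity μ s xs b ∂μ = ∫ b in Iio 0, tiltDensity μ t xt b ∂μ) :
    ∃ u v, (∀ b, 0 ≤ b → 0 ≤ (v - b) * (tiltDensity μ t xt b - tiltDensity μ s xs b)) ∧
      (∀ b, b ≤ 0 → 0 ≤ (u - b) * (tiltDensity μ s xs b - tiltDensity μ t xt b)) ∧
      ∀ b, tiltDensity μ t xt b = tiltDensity μ s xs b → b = u ∨ b = v := by
  have ht : 0 ≤ t := hs.trans hst.le
  have iF := integrable_tiltDensity hε hexp hs xs
  have iG := integrable_tiltDensity hε hexp ht xt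
  obtain ⟨γ, hratio⟩ := tiltDensity_eq_mul_exp (integrable_exp_tilt hε hexp hs xs)
    (integrable_exp_tilt hε hexp ht xt)
  obtain ⟨b₂, hb₂, h₂⟩ :=
    exists_le_of_setIntegral_eq measurableSet_Ici hμ0 iF.integrableOn iG.integrableOn hIci
  obtain ⟨b₁, hb₁, h₁⟩ :=
    exists_le_of_setIntegral_eq measurableSet_Iio hμ1 iF.integrableOn iG.integrableOn hIio
  exact exists_single_crossing (by linarith)
    (tiltDensity_pos (integrable_exp_tilt hε hexp hs xs)) hratio (le_of_lt hb₁) hb₂ h₁ h₂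

lemma tiltMean_comparison [NeZero μ] (hε : 0 < ε)
    (hexp : Integrable (fun b => Real.exp (ε * b ^ 2)) μ)
    (hμ0 : μ (Ici 0) ≠ 0) (hμ1 : μ (Iio 0) ≠ 0) (hs : 0 ≤ s) (hst : s < t)
    (hlevel : tiltProb μ s xs (Ici 0) = tiltProb μ t xt (Ici 0)) :
    tiltMean μ t xt (Ici 0) ≤ tiltMean μ s xs (Ici 0) ∧
      tiltMean μ s xs (Iio 0) ≤ tiltMean μ t xt (Iio 0) ∧
      (tiltMean μ t xt (Ici 0) = tiltMean μ s xs (Ici 0) →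
        tiltMean μ s xs (Iio 0) = tiltMean μ t xt (Iio 0) →
        ∃ a₁ a₂, ∀ᵐ b ∂μ, b ∈ ({a₁, a₂} : Set ℝ)) := by
  have ht : 0 ≤ t := hs.trans hst.le
  have hlevel' : tiltProb μ s xs (Iio 0) = tiltProb μ t xt (Iio 0) := by
    rw [← compl_Ici, tiltProb_compl measurableSet_Ici (integrable_exp_tilt hε hexp hs xs),
      tiltProb_compl measurableSet_Ici (integrable_exp_tilt hε hexp ht xt), hlevel]
  rw [tiltProb_eq_setIntegral, tiltProb_eq_setIntegral] at hlevel hlevel'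
  obtain ⟨u, v, hcrossIci, hcrossIio, hpair⟩ :=
    exists_crossing_tiltDensity hε hexp hμ0 hμ1 hs hst hlevel hlevel'
  simp only [tiltMean_eq_setIntegral]
  have iF := integrable_tiltDensity hε hexp hs xs
  have iG := integrable_tiltDensity hε hexp ht xt
  have ibF := integrable_mul_tiltDensity hε hexp hs xs
  have ibG := integrable_mul_tiltDensity hε hexp ht xt
  have hIci := ae_restrict_of_forall_mem (μ := μ) measurableSet_Ici hcrossIci
  have hIio := ae_restrict_of_forall_mem (μ := μ) measurableSet_Iio
    fun b (hb : b < 0) => hcrossIio b hb.le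
  refine ⟨integral_mul_le_of_crossing iF.integrableOn iG.integrableOn ibF.integrableOn
      ibG.integrableOn hlevel hIci,
    integral_mul_le_of_crossing iG.integrableOn iF.integrableOn ibG.integrableOn
      ibF.integrableOn hlevel'.symm hIio, fun heqIci heqIio => ⟨u, v, ?_⟩⟩
  have h₁ := ae_crossing_eq_zero iF.integrableOn iG.integrableOn ibF.integrableOn
    ibG.integrableOn hlevel hIci heqIci
  have h₂ := ae_crossing_eq_zero iG.integrableOn iF.integrableOn ibG.integrableOn
    ibF.integrableOn hlevel'.symm hIio heqIio
  rw [ae_restrict_iff' measurableSet_Ici] at h₁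
  rw [ae_restrict_iff' measurableSet_Iio] at h₂
  filter_upwards [h₁, h₂] with b h₁ h₂
  rcases le_or_gt 0 b with hb | hb
  · rcases mul_eq_zero.1 (h₁ hb) with h | h
    · exact .inr (sub_eq_zero.1 h).symm
    · exact hpair b (sub_eq_zero.1 h)
  · rcases mul_eq_zero.1 (h₂ hb) with h | h
    · exact .inl (sub_eq_zero.1 h).symm
    · exact hpair b (sub_eq_zero.1 h).symm

end Comparison

noncomputable def volatility (μ : Measure ℝ) (t x π : ℝ) : ℝ :=
  (1 - π) * tiltMean μ t x (Ici 0) - π * tiltMean μ t x (Iio 0)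

section Volatility

variable {μ : Measure ℝ} {ε s t x xs xt π : ℝ}

lemma volatility_le_of_lt [NeZero μ] (hε : 0 < ε)
    (hexp : Integrable (fun b => Real.exp (ε * b ^ 2)) μ)
    (hμ0 : μ (Ici 0) ≠ 0) (hμ1 : μ (Iio 0) ≠ 0) (hπ : π ∈ Icc (0 : ℝ) 1)
    (hs : 0 ≤ s) (hst : s < t) (hlevel : tiltProb μ s xs (Ici 0) = tiltProb μ t xt (Ici 0)) :
    volatility μ t xt π ≤ volatility μ s xs π := by
  obtain ⟨hIci, hIio, -⟩ := tiltMean_comparison hε hexp hμ0 hμ1 hs hst hlevel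
  unfold volatility
  nlinarith [mul_le_mul_of_nonneg_left hIci (sub_nonneg.2 hπ.2),
    mul_le_mul_of_nonneg_left hIio hπ.1]

lemma exists_measure_pair_of_volatility_eq [IsProbabilityMeasure μ] (hε : 0 < ε)
    (hexp : Integrable (fun b => Real.exp (ε * b ^ 2)) μ)
    (hμ0 : μ (Ici 0) ≠ 0) (hμ1 : μ (Iio 0) ≠ 0) (hπ : π ∈ Ioo (0 : ℝ) 1)
    (hs : 0 ≤ s) (hst : s < t) (hlevel : tiltProb μ s xs (Ici 0) = tiltProb μ t xt (Ici 0))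
    (heq : volatility μ t xt π = volatility μ s xs π) :
    ∃ a₁ a₂ : ℝ, μ ({a₁, a₂} : Set ℝ) = 1 := by
  obtain ⟨hIci, hIio, hpair⟩ := tiltMean_comparison hε hexp hμ0 hμ1 hs hst hlevel
  unfold volatility at heq
  have hIci' : (1 - π) * tiltMean μ s xs (Ici 0) ≤ (1 - π) * tiltMean μ t xt (Ici 0) := by
    nlinarith [mul_nonneg hπ.1.le (sub_nonneg.2 hIio)]
  have hIio' : π * tiltMean μ t xt (Iio 0) ≤ π * tiltMean μ s xs (Iio 0) := by
    nlinarith [mul_nonneg (sub_nonneg.2 hπ.2.le) (sub_nonneg.2 hIci)]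
  obtain ⟨a₁, a₂, hae⟩ := hpair (hIci.antisymm (le_of_mul_le_mul_left hIci' (sub_pos.2 hπ.2)))
    (hIio.antisymm (le_of_mul_le_mul_left hIio' hπ.1))
  refine ⟨a₁, a₂, ?_⟩
  rwa [ae_mem_iff_measure_eq ((measurableSet_singleton a₂).insert a₁).nullMeasurableSet,
    measure_univ] at hae

lemma exists_ae_restrict_eq_of_measure_pair [IsProbabilityMeasure μ] {a₁ a₂ : ℝ}
    (hpair : μ ({a₁, a₂} : Set ℝ) = 1) (hμ0 : μ (Ici 0) ≠ 0) (hμ1 : μ (Iio 0) ≠ 0) :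
    ∃ a c, (∀ᵐ b ∂μ.restrict (Ici 0), b = a) ∧ ∀ᵐ b ∂μ.restrict (Iio 0), b = c := by
  wlog hle : a₁ ≤ a₂ generalizing a₁ a₂
  · exact this (by rwa [pair_comm]) (le_of_not_ge hle)
  have hae : ∀ᵐ b ∂μ, b = a₁ ∨ b = a₂ := by
    rwa [← measure_univ (μ := μ), ← ae_mem_iff_measure_eq
      ((measurableSet_singleton a₂).insert a₁).nullMeasurableSet] at hpair
  have hnull : μ {b | ¬(b = a₁ ∨ b = a₂)} = 0 := ae_iff.1 hae
  have ha₁ : a₁ < 0 := by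
    by_contra! h
    exact hμ1 (measure_mono_null (fun b (hb : b < 0) => by
      rintro (rfl | rfl) <;> linarith) hnull)
  have ha₂ : 0 ≤ a₂ := by
    by_contra! h
    exact hμ0 (measure_mono_null (fun b (hb : 0 ≤ b) => by
      rintro (rfl | rfl) <;> linarith) hnull)
  refine ⟨a₂, a₁, ?_, ?_⟩
  · rw [ae_restrict_iff' measurableSet_Ici]
    filter_upwards [hae] with b hb (hb0 : 0 ≤ b)
    exact hb.resolve_left (by rintro rfl; linarith)
  · rw [ae_restrict_iff' measurableSet_Iio]
    filter_upwards [hae] with b hb (hb0 : b < 0)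
    exact hb.resolve_right (by rintro rfl; linarith)

lemma volatility_eq_of_ae_restrict_eq [NeZero μ] {a c : ℝ}
    (hint : Integrable (fun b => Real.exp (b * x - b ^ 2 * t / 2)) μ)
    (ha : ∀ᵐ b ∂μ.restrict (Ici 0), b = a) (hc : ∀ᵐ b ∂μ.restrict (Iio 0), b = c)
    (hlevel : tiltProb μ t x (Ici 0) = π) :
    volatility μ t x π = π * (1 - π) * (a - c) := by
  rw [volatility, tiltMean_eq_mul_tiltProb ha, tiltMean_eq_mul_tiltProb hc, ← compl_Ici,
    tiltProb_compl measurableSet_Ici hint, hlevel]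
  ring

end Volatility

theorem stmt_6 (μ : Measure ℝ) [IsProbabilityMeasure μ]
    (hμ0 : 0 < μ (Set.Ici (0:ℝ))) (hμ1 : μ (Set.Ici (0:ℝ)) < 1)
    (ε : ℝ) (hε : 0 < ε)
    (hexp : Integrable (fun b => Real.exp (ε * b ^ 2)) μ)
    (x : ℝ → ℝ → ℝ)
    (hx : ∀ t, 0 ≤ t → ∀ π ∈ Set.Ioo (0:ℝ) 1, tiltProb μ t (x t π) (Set.Ici 0) = π)
    (σ : ℝ → ℝ → ℝ)
    (hσ : ∀ t π, σ t π =
      (1 - π) * tiltMean μ t (x t π) (Set.Ici 0) - π * tiltMean μ t (x t π) (Set.Iio 0)) :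
    ∀ π ∈ Set.Ioo (0:ℝ) 1,
      AntitoneOn (fun t => σ t π) (Set.Ici 0) ∧
      ((¬ ∃ a₁ a₂ : ℝ, μ ({a₁, a₂} : Set ℝ) = 1) →
        StrictAntiOn (fun t => σ t π) (Set.Ici 0)) ∧
      ((∃ a₁ a₂ : ℝ, μ ({a₁, a₂} : Set ℝ) = 1) →
        ∀ t, 0 ≤ t → σ t π = σ 0 π) := by
  intro π hπ
  have hIio : μ (Iio 0) ≠ 0 := by
    rw [← compl_Ici, prob_compl_eq_one_sub measurableSet_Ici]
    exact (tsub_pos_of_lt hμ1).ne'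
  have hσ' : ∀ t, σ t π = volatility μ t (x t π) π := fun t => hσ t π
  have hlevel : ∀ s ∈ Ici (0 : ℝ), ∀ t ∈ Ici (0 : ℝ),
      tiltProb μ s (x s π) (Ici 0) = tiltProb μ t (x t π) (Ici 0) :=
    fun s hs t ht => (hx s hs π hπ).trans (hx t ht π hπ).symm
  have hanti : ∀ s ∈ Ici (0 : ℝ), ∀ t ∈ Ici (0 : ℝ), s < t → σ t π ≤ σ s π :=
    fun s hs t ht hst => by
      simpa only [hσ'] using volatility_le_of_lt hε hexp hμ0.ne' hIio (Ioo_subset_Icc_self hπ)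
        hs hst (hlevel s hs t ht)
  refine ⟨fun s hs t ht hst => ?_, fun hnot s hs t ht hst => ?_, ?_⟩
  · rcases hst.eq_or_lt with rfl | hst
    exacts [le_rfl, hanti s hs t ht hst]
  · refine (hanti s hs t ht hst).lt_of_ne fun heq => hnot ?_
    rw [hσ', hσ'] at heq
    exact exists_measure_pair_of_volatility_eq hε hexp hμ0.ne' hIio hπ hs hst
      (hlevel s hs t ht) heq
  · rintro ⟨a₁, a₂, hpair⟩ t ht
    obtain ⟨a, c, ha, hc⟩ := exists_ae_restrict_eq_of_measure_pair hpair hμ0.ne' hIio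
    rw [hσ', hσ', volatility_eq_of_ae_restrict_eq (integrable_exp_tilt hε hexp ht _) ha hc
      (hx t ht π hπ), volatility_eq_of_ae_restrict_eq (integrable_exp_tilt hε hexp le_rfl _)
      ha hc (hx 0 le_rfl π hπ)]
end

section
/- With l < r defined as the right endpoint of supp(μ) ∩ (-∞,0) and left endpoint of supp(μ) ∩ [0,∞) respectively, suppose m = (l+r)/2 < α < r. Then h(t) = ∫_{(-∞,0)} e^{-(b-α)²t/2} μ(db) / ∫_{[0,∞)} e^{-(b-α)²t/2} μ(db) → 0 as t → ∞. -/
open MeasureTheory Set Filter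

/-- The left endpoint `r` of the support of `μ` restricted to `[0,∞)`. -/
noncomputable def rEnd (μ : Measure ℝ) : ℝ :=
  sInf {s : ℝ | 0 ≤ s ∧ ∀ ε > (0:ℝ), 0 < μ (Set.Ico s (s + ε))}

/-- The right endpoint `l` of the support of `μ` restricted to `(-∞,0)`. -/
noncomputable def lEnd (μ : Measure ℝ) : ℝ :=
  sSup {s : ℝ | s < 0 ∧ ∀ ε > (0:ℝ), 0 < μ (Set.Ioc (s - ε) s)}


/-!
Fix `γ > r` with `γ - α < α - l`. Since `μ` does not charge `(l, 0)`, every `b < 0` in the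
support satisfies `|b - α| ≥ α - l`, so the numerator is `O(exp (-(α - l)² t / 2))`. By the
definition of `r`, `μ` charges some `[s, γ)` with `r ≤ s`, on which `|b - α| ≤ γ - α`, so the
denominator is `≥ c · exp (-(γ - α)² t / 2)` with `c > 0`. Both endpoint facts come from taking
the extreme point of the (closed) support of a restriction of `μ`.
-/

open Real Topology

section Support

variable {μ : Measure ℝ}

lemma measure_Ioc_pos_of_mem_support {s ε : ℝ} (hs : s ∈ μ.support) (hμ : μ (Ioi s) = 0)
    (hε : 0 < ε) : 0 < μ (Ioc (s - ε) s) := by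
  have hball : 0 < μ (Ioo (s - ε) (s + ε)) :=
    (μ.mem_support_iff_forall s).1 hs _ (Ioo_mem_nhds (by linarith) (by linarith))
  calc 0 < μ (Ioo (s - ε) (s + ε)) := hball
    _ ≤ μ (Ioc (s - ε) s ∪ Ioi s) := measure_mono fun x hx => by
        rcases le_or_gt x s with h | h
        exacts [Or.inl ⟨hx.1, h⟩, Or.inr h]
    _ ≤ μ (Ioc (s - ε) s) + μ (Ioi s) := measure_union_le _ _
    _ = μ (Ioc (s - ε) s) := by rw [hμ, add_zero]

lemma measure_Ico_pos_of_mem_support {s ε : ℝ} (hs : s ∈ μ.support) (hμ : μ (Iio s) = 0)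
    (hε : 0 < ε) : 0 < μ (Ico s (s + ε)) := by
  have hball : 0 < μ (Ioo (s - ε) (s + ε)) :=
    (μ.mem_support_iff_forall s).1 hs _ (Ioo_mem_nhds (by linarith) (by linarith))
  calc 0 < μ (Ioo (s - ε) (s + ε)) := hball
    _ ≤ μ (Iio s ∪ Ico s (s + ε)) := measure_mono fun x hx => by
        rcases lt_or_ge x s with h | h
        exacts [Or.inl h, Or.inr ⟨h, hx.2⟩]
    _ ≤ μ (Iio s) + μ (Ico s (s + ε)) := measure_union_le _ _
    _ = μ (Ico s (s + ε)) := by rw [hμ, zero_add]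

lemma exists_mem_closure_forall_measure_Ioc_pos {S : Set ℝ} (hS : BddAbove S) (h : μ S ≠ 0) :
    ∃ s ∈ closure S, μ (S ∩ Ioi s) = 0 ∧ ∀ ε > 0, 0 < μ (Ioc (s - ε) s) := by
  set ν := μ.restrict S
  have hsupp : ν.support ⊆ closure S := fun x hx => (Measure.support_restrict_subset hx).1
  have hbdd : BddAbove ν.support := hS.closure.mono hsupp
  have hne : ν.support.Nonempty := Measure.nonempty_support (by simpa [ν] using h)
  set s := sSup ν.support
  have hs : s ∈ ν.support := Measure.isClosed_support.csSup_mem hne hbdd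
  have hνs : ν (Ioi s) = 0 :=
    measure_mono_null (fun x (hx : s < x) hxs => not_le.2 hx (le_csSup hbdd hxs))
      ν.measure_compl_support
  refine ⟨s, hsupp hs, by rwa [Measure.restrict_apply measurableSet_Ioi, inter_comm] at hνs,
    fun ε hε => (measure_Ioc_pos_of_mem_support hs hνs hε).trans_le ?_⟩
  exact Measure.restrict_apply_le _ _

lemma exists_mem_closure_forall_measure_Ico_pos {S : Set ℝ} (hS : BddBelow S) (h : μ S ≠ 0) :
    ∃ s ∈ closure S, ∀ ε > 0, 0 < μ (Ico s (s + ε)) := by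
  set ν := μ.restrict S
  have hsupp : ν.support ⊆ closure S := fun x hx => (Measure.support_restrict_subset hx).1
  have hbdd : BddBelow ν.support := hS.closure.mono hsupp
  have hne : ν.support.Nonempty := Measure.nonempty_support (by simpa [ν] using h)
  set s := sInf ν.support
  have hs : s ∈ ν.support := Measure.isClosed_support.csInf_mem hne hbdd
  have hνs : ν (Iio s) = 0 :=
    measure_mono_null (fun x (hx : x < s) hxs => not_le.2 hx (csInf_le hbdd hxs))
      ν.measure_compl_support
  exact ⟨s, hsupp hs, fun ε hε =>
    (measure_Ico_pos_of_mem_support hs hνs hε).trans_le (Measure.restrict_apply_le _ _)⟩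

end Support

lemma measure_Ioo_lEnd_eq_zero (μ : Measure ℝ) : μ (Ioo (lEnd μ) 0) = 0 := by
  -- the top of the support of `μ` on `(lEnd μ, x / 2)` would lie in the set defining `lEnd μ`
  by_contra h
  obtain ⟨x, ⟨hlx, hx0⟩, hx⟩ := Measure.nonempty_inter_support_of_pos (pos_iff_ne_zero.2 h)
  have hc : μ (Ioo (lEnd μ) (x / 2)) ≠ 0 :=
    ((μ.mem_support_iff_forall x).1 hx _ (Ioo_mem_nhds hlx (by linarith))).ne'
  obtain ⟨s, hs, hnull, hpos⟩ := exists_mem_closure_forall_measure_Ioc_pos bddAbove_Ioo hc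
  rw [closure_Ioo (by linarith)] at hs
  have hsl : s ≤ lEnd μ := le_csSup ⟨0, fun _ hy => hy.1.le⟩ ⟨by linarith [hs.2], hpos⟩
  rw [le_antisymm hsl hs.1, inter_eq_left.2 Ioo_subset_Ioi_self] at hnull
  exact hc hnull

lemma exists_measure_Ico_pos_of_rEnd_lt {μ : Measure ℝ} (hμ : μ (Ici 0) ≠ 0) {γ : ℝ}
    (hγ : rEnd μ < γ) : ∃ s, rEnd μ ≤ s ∧ 0 ≤ s ∧ 0 < μ (Ico s γ) := by
  have hne : {s : ℝ | 0 ≤ s ∧ ∀ ε > (0:ℝ), 0 < μ (Ico s (s + ε))}.Nonempty := by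
    obtain ⟨s, hs, hpos⟩ := exists_mem_closure_forall_measure_Ico_pos bddBelow_Ici hμ
    exact ⟨s, by rwa [closure_Ici] at hs, hpos⟩
  obtain ⟨s, ⟨hs0, hpos⟩, hsγ⟩ := exists_lt_of_csInf_lt hne hγ
  refine ⟨s, csInf_le ⟨0, fun _ hy => hy.1⟩ ⟨hs0, hpos⟩, hs0, ?_⟩
  simpa using hpos (γ - s) (by linarith)

section GaussianKernel

variable {μ : Measure ℝ} [IsFiniteMeasure μ] {s : Set ℝ} {α d t : ℝ}

lemma integrable_exp_neg_sq_sub (ht : 0 ≤ t) :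
    Integrable (fun b => exp (-(b - α) ^ 2 * t / 2)) μ := by
  refine (integrable_const 1).mono' (by fun_prop) (ae_of_all _ fun b => ?_)
  rw [norm_of_nonneg (exp_pos _).le, exp_le_one_iff]
  nlinarith [sq_nonneg (b - α)]

lemma setIntegral_exp_neg_sq_sub_le (hs : MeasurableSet s) (ht : 0 ≤ t) (hd : 0 ≤ d)
    (hfar : ∀ᵐ b ∂μ, b ∈ s → d ≤ |b - α|) :
    ∫ b in s, exp (-(b - α) ^ 2 * t / 2) ∂μ ≤ μ.real s * exp (-d ^ 2 * t / 2) := by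
  rw [← smul_eq_mul, ← setIntegral_const]
  refine integral_mono_ae (integrable_exp_neg_sq_sub ht).integrableOn (integrable_const _) ?_
  filter_upwards [(ae_restrict_iff' hs).2 hfar] with b hb
  have : d ^ 2 ≤ (b - α) ^ 2 := sq_abs (b - α) ▸ pow_le_pow_left₀ hd hb 2
  exact exp_le_exp.2 (by nlinarith)

lemma le_setIntegral_exp_neg_sq_sub (hs : MeasurableSet s) (ht : 0 ≤ t)
    (hnear : ∀ b ∈ s, |b - α| ≤ d) :
    μ.real s * exp (-d ^ 2 * t / 2) ≤ ∫ b in s, exp (-(b - α) ^ 2 * t / 2) ∂μ := by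
  rw [← smul_eq_mul, ← setIntegral_const]
  refine setIntegral_mono_on (integrable_const _).integrableOn
    (integrable_exp_neg_sq_sub ht).integrableOn hs fun b hb => ?_
  have : (b - α) ^ 2 ≤ d ^ 2 := sq_abs (b - α) ▸ pow_le_pow_left₀ (abs_nonneg _) (hnear b hb) 2
  exact exp_le_exp.2 (by nlinarith)

end GaussianKernel

lemma tendsto_mul_exp_div_mul_exp_atTop (c₁ c₂ : ℝ) {p q : ℝ} (hpq : p < q) :
    Tendsto (fun t => c₁ * exp (-q * t / 2) / (c₂ * exp (-p * t / 2))) atTop (𝓝 0) := by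
  have hexp : Tendsto (fun t => exp (-((q - p) / 2 * t))) atTop (𝓝 0) :=
    tendsto_exp_neg_atTop_nhds_zero.comp (tendsto_id.const_mul_atTop (by linarith))
  convert hexp.const_mul (c₁ / c₂) using 1
  · ext t
    rw [mul_div_mul_comm, ← exp_sub]
    ring_nf
  · simp

theorem stmt_11_general (μ : Measure ℝ) [IsProbabilityMeasure μ]
    (hμ0 : 0 < μ (Set.Ici (0:ℝ)))
    (l r : ℝ) (hl : l = lEnd μ) (hr : r = rEnd μ)
    (α : ℝ) (hα1 : (l + r) / 2 < α) (hα2 : α < r) :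
    Tendsto (fun t =>
      (∫ b in Set.Iio (0:ℝ), Real.exp (-(b - α) ^ 2 * t / 2) ∂μ) /
      (∫ b in Set.Ici (0:ℝ), Real.exp (-(b - α) ^ 2 * t / 2) ∂μ))
      atTop (nhds 0) := by
  obtain ⟨γ, hrγ, hγ⟩ : ∃ γ, r < γ ∧ γ - α < α - l :=
    ⟨(r + 2 * α - l) / 2, by linarith, by linarith⟩
  obtain ⟨s, hrs, hs0, hmass⟩ := exists_measure_Ico_pos_of_rEnd_lt hμ0.ne' (hr ▸ hrγ)
  have hfar : ∀ᵐ b ∂μ, b ∈ Iio 0 → α - l ≤ |b - α| := by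
    filter_upwards [measure_eq_zero_iff_ae_notMem.1 (hl ▸ measure_Ioo_lEnd_eq_zero μ)]
      with b hb hb0
    have hbl : b ≤ l := not_lt.1 fun hlb => hb ⟨hlb, hb0⟩
    rw [abs_sub_comm]
    exact (by linarith : α - l ≤ α - b).trans (le_abs_self _)
  have hnear : ∀ b ∈ Ico s γ, |b - α| ≤ γ - α := fun b hb => by
    rw [abs_of_nonneg (by linarith [hb.1, hr ▸ hrs])]
    linarith [hb.2]
  have hden : ∀ t ≥ (0 : ℝ), μ.real (Ico s γ) * exp (-(γ - α) ^ 2 * t / 2) ≤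
      ∫ b in Ici 0, exp (-(b - α) ^ 2 * t / 2) ∂μ := fun t ht =>
    (le_setIntegral_exp_neg_sq_sub measurableSet_Ico ht hnear).trans <|
      setIntegral_mono_set (integrable_exp_neg_sq_sub ht).integrableOn
        (ae_of_all _ fun _ => (exp_pos _).le)
        (Ico_subset_Ici_self.trans (Ici_subset_Ici.2 hs0)).eventuallyLE
  refine squeeze_zero' (Eventually.of_forall fun t => div_nonneg
      (setIntegral_nonneg measurableSet_Iio fun _ _ => (exp_pos _).le)
      (setIntegral_nonneg measurableSet_Ici fun _ _ => (exp_pos _).le))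
    ((eventually_ge_atTop 0).mono fun t ht => div_le_div₀ (by positivity)
      (setIntegral_exp_neg_sq_sub_le measurableSet_Iio ht (by linarith) hfar)
      (mul_pos (ENNReal.toReal_pos hmass.ne' (measure_ne_top _ _)) (exp_pos _)) (hden t ht))
    (tendsto_mul_exp_div_mul_exp_atTop _ _
      (pow_lt_pow_left₀ hγ (by linarith) two_ne_zero))

theorem stmt_11 (μ : Measure ℝ) [IsProbabilityMeasure μ]
    (hμ0 : 0 < μ (Set.Ici (0:ℝ))) (hμ1 : μ (Set.Ici (0:ℝ)) < 1)
    (ε : ℝ) (hε : 0 < ε)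
    (hexp : Integrable (fun b => Real.exp (ε * b ^ 2)) μ)
    (l r : ℝ) (hl : l = lEnd μ) (hr : r = rEnd μ) (hlr : l < r)
    (α : ℝ) (hα1 : (l + r) / 2 < α) (hα2 : α < r) :
    Tendsto (fun t =>
      (∫ b in Set.Iio (0:ℝ), Real.exp (-(b - α) ^ 2 * t / 2) ∂μ) /
      (∫ b in Set.Ici (0:ℝ), Real.exp (-(b - α) ^ 2 * t / 2) ∂μ))
      atTop (nhds 0) :=
  stmt_11_general μ hμ0 l r hl hr α hα1 hα2
end

section
/- Let f : (0,1) → ℝ be concave with 0 ≤ f(π) ≤ min(π, 1-π) for all π ∈ (0,1). Then |f(π₁) - f(π₂)| ≤ |π₁ - π₂| for all π₁, π₂ ∈ (0,1), and f extends continuously to [0,1] with f(0) = f(1) = 0. -/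
/-!
For `x < y`, concavity bounds the chord slope of `f` on `[x, y]` by the slope on `[ε, x]` for any
`ε < x`; as `f ε ≥ 0`, that slope is at most `f x / (x - ε)`, which tends to `f x / x ≤ 1` as
`ε → 0`. The mirror-image argument at the right endpoint gives the slope bound `≥ -1`, so `f` is
`1`-Lipschitz. Extending `f` by `0` stays `1`-Lipschitz on `[0, 1]` because `f x ≤ min x (1 - x)`
is exactly the distance from `x` to the endpoints.
-/

open Set Filter Topology

theorem ConcaveOn.slope_le_div_sub_left {a b x y : ℝ} {f : ℝ → ℝ}
    (hf : ConcaveOn ℝ (Ioo a b) f) (hf₀ : ∀ z ∈ Ioo a b, 0 ≤ f z)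
    (hx : x ∈ Ioo a b) (hy : y ∈ Ioo a b) (hxy : x < y) :
    (f y - f x) / (y - x) ≤ f x / (x - a) := by
  have hslope : ∀ ε ∈ Ioo a x, (f y - f x) / (y - x) ≤ f x / (x - ε) := by
    rintro ε ⟨haε, hεx⟩
    have hε : ε ∈ Ioo a b := ⟨haε, hεx.trans hx.2⟩
    calc (f y - f x) / (y - x) ≤ (f x - f ε) / (x - ε) := hf.slope_anti_adjacent hε hy hεx hxy
      _ ≤ f x / (x - ε) := by gcongr; linarith [hf₀ ε hε]
  have hlim : Tendsto (fun ε => f x / (x - ε)) (𝓝[>] a) (𝓝 (f x / (x - a))) :=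
    (tendsto_const_nhds.div (tendsto_const_nhds.sub tendsto_id) (sub_ne_zero.2 hx.1.ne')).mono_left
      nhdsWithin_le_nhds
  exact ge_of_tendsto hlim <| eventually_of_mem (Ioo_mem_nhdsGT hx.1) hslope

theorem ConcaveOn.neg_div_sub_right_le_slope {a b x y : ℝ} {f : ℝ → ℝ}
    (hf : ConcaveOn ℝ (Ioo a b) f) (hf₀ : ∀ z ∈ Ioo a b, 0 ≤ f z)
    (hx : x ∈ Ioo a b) (hy : y ∈ Ioo a b) (hxy : x < y) :
    -(f y / (b - y)) ≤ (f y - f x) / (y - x) := by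
  have hneg : (-LinearMap.id : ℝ →ₗ[ℝ] ℝ) ⁻¹' Ioo a b = Ioo (-b) (-a) := by
    ext z; simp [and_comm, lt_neg, neg_lt]
  have hf' := hf.comp_linearMap (-LinearMap.id)
  rw [hneg] at hf'
  have := hf'.slope_le_div_sub_left (fun z hz => hf₀ (-z) ⟨by linarith [hz.2], by linarith [hz.1]⟩)
    ⟨neg_lt_neg hy.2, neg_lt_neg hy.1⟩ ⟨neg_lt_neg hx.2, neg_lt_neg hx.1⟩ (neg_lt_neg hxy)
  simp only [Function.comp_apply, LinearMap.neg_apply, LinearMap.id_apply, neg_neg] at this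
  rw [neg_le, ← neg_div, neg_sub]
  convert this using 2 <;> ring

theorem ConcaveOn.lipschitzOnWith_one_of_le_min {a b : ℝ} {f : ℝ → ℝ}
    (hf : ConcaveOn ℝ (Ioo a b) f)
    (hbound : ∀ z ∈ Ioo a b, 0 ≤ f z ∧ f z ≤ min (z - a) (b - z)) :
    LipschitzOnWith 1 f (Ioo a b) := by
  have hf₀ z hz := (hbound z hz).1
  refine LipschitzOnWith.mk_one fun x hx y hy => ?_
  wlog hxy : x < y generalizing x y
  · rcases (not_lt.1 hxy).eq_or_lt with rfl | hyx
    · simp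
    · rw [dist_comm, dist_comm x]; exact this y hy x hx hyx
  have hpos : 0 < y - x := sub_pos.2 hxy
  have hupper : (f y - f x) / (y - x) ≤ 1 :=
    (hf.slope_le_div_sub_left hf₀ hx hy hxy).trans <|
      (div_le_one (sub_pos.2 hx.1)).2 ((hbound x hx).2.trans (min_le_left _ _))
  have hlower : -1 ≤ (f y - f x) / (y - x) :=
    (neg_le_neg <| (div_le_one (sub_pos.2 hy.2)).2 ((hbound y hy).2.trans (min_le_right _ _))).trans
      (hf.neg_div_sub_right_le_slope hf₀ hx hy hxy)
  rw [div_le_one hpos] at hupper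
  rw [le_div_iff₀ hpos] at hlower
  rw [Real.dist_eq, Real.dist_eq, abs_sub_comm x, abs_of_pos hpos, abs_sub_comm, abs_le]
  constructor <;> linarith

theorem LipschitzOnWith.indicator_of_norm_le {α E : Type*} [PseudoMetricSpace α]
    [SeminormedAddCommGroup E] {K : NNReal} {s t : Set α} {f : α → E}
    (hf : LipschitzOnWith K f s) (hbd : ∀ x ∈ s, ∀ y ∈ t \ s, ‖f x‖ ≤ K * dist x y) :
    LipschitzOnWith K (s.indicator f) t := by
  refine LipschitzOnWith.of_dist_le_mul fun x hx y hy => ?_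
  by_cases hxs : x ∈ s <;> by_cases hys : y ∈ s
  · simpa [hxs, hys] using hf.dist_le_mul x hxs y hys
  · simpa [hxs, hys] using hbd x hxs y ⟨hy, hys⟩
  · simpa [hxs, hys, dist_comm x] using hbd y hys x ⟨hx, hxs⟩
  · rw [indicator_of_notMem hxs, indicator_of_notMem hys, dist_self]; positivity

theorem stmt_16 (f : ℝ → ℝ)
    (hconc : ConcaveOn ℝ (Set.Ioo 0 1) f)
    (hbound : ∀ p ∈ Set.Ioo (0:ℝ) 1, 0 ≤ f p ∧ f p ≤ min p (1 - p)) :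
    (∀ p₁ ∈ Set.Ioo (0:ℝ) 1, ∀ p₂ ∈ Set.Ioo (0:ℝ) 1, |f p₁ - f p₂| ≤ |p₁ - p₂|) ∧
    ∃ g : ℝ → ℝ, ContinuousOn g (Set.Icc 0 1) ∧ Set.EqOn g f (Set.Ioo 0 1) ∧
      g 0 = 0 ∧ g 1 = 0 := by
  have hlip : LipschitzOnWith 1 f (Ioo 0 1) :=
    hconc.lipschitzOnWith_one_of_le_min (by simpa only [sub_zero] using hbound)
  refine ⟨fun p₁ h₁ p₂ h₂ => by simpa [Real.dist_eq] using hlip.dist_le_mul p₁ h₁ p₂ h₂,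
    (Ioo 0 1).indicator f, ?_, eqOn_indicator, by simp, by simp⟩
  refine (hlip.indicator_of_norm_le fun x hx y hy => ?_).continuousOn
  rw [Icc_sdiff_Ioo_same zero_le_one] at hy
  have ⟨hf₀, hfx⟩ := hbound x hx
  rw [Real.norm_of_nonneg hf₀, NNReal.coe_one, one_mul, Real.dist_eq]
  rcases hy with rfl | rfl
  · rw [sub_zero]; exact hfx.trans ((min_le_left _ _).trans (le_abs_self _))
  · rw [abs_sub_comm]; exact hfx.trans ((min_le_right _ _).trans (le_abs_self _))
end
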